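/- arXiv:1501.05715 — 6 statements merged into one kernel-verified Lean document; each statement's English description precedes it below -/
import Mathlib

section
/- For the system F(x,y) = (x·[(c−4)y + x(x+3y−3) + 2], y·[c(μ+y−1) − 3μ + x(2μ+x+3y−1)]), the point (1, 0) (all-ALLD) is an equilibrium, its Jacobian matrix at (1,0) is triangular with eigenvalues −1 and c(μ−1) − μ, and if c(1−μ) + μ > 0 then both eigenvalues are negative, so (1,0) is a linearly asymptotically stable node. -/
/-! Along each coordinate line through `(1, 0)` both components of the vector field are cubic
polynomials, so every partial derivative at the vertex is read off from the derivative of a cubic. -/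

theorem deriv_eq_of_eq_cubic {f : ℝ → ℝ} (a b d e t : ℝ)
    (hf : ∀ x, f x = a * x ^ 3 + b * x ^ 2 + d * x + e) :
    deriv f t = 3 * a * t ^ 2 + 2 * b * t + d := by
  have hcubic : HasDerivAt (fun x => a * x ^ 3 + b * x ^ 2 + d * x + e)
      (a * (3 * t ^ 2) + b * (2 * t) + d * 1) t := by
    simpa using ((((hasDerivAt_pow 3 t).const_mul a).add ((hasDerivAt_pow 2 t).const_mul b)).add
      ((hasDerivAt_id t).const_mul d)).add_const e
  rw [funext hf, hcubic.deriv]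
  ring

/-- For the TFT → ALLC replicator-mutator system, `(1,0)` (all-ALLD) is an
equilibrium whose Jacobian is triangular with eigenvalues `−1` and `c(μ−1)−μ`;
if `c(1−μ)+μ > 0` then both eigenvalues are negative, so `(1,0)` is a linearly
asymptotically stable node. -/
theorem ALLD_vertex_stable_node_TFT_to_ALLC (c μ : ℝ)
    (F1 F2 : ℝ → ℝ → ℝ)
    (hF1 : ∀ x y, F1 x y = x * ((c - 4) * y + x * (x + 3 * y - 3) + 2))
    (hF2 : ∀ x y, F2 x y = y * (c * (μ + y - 1) - 3 * μ + x * (2 * μ + x + 3 * y - 1))) :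
    F1 1 0 = 0 ∧ F2 1 0 = 0 ∧
    (deriv (fun x => F1 x 0) 1 = -1 ∧
     deriv (fun y => F1 1 y) 0 = c - 1 ∧
     deriv (fun x => F2 x 0) 1 = 0 ∧
     deriv (fun y => F2 1 y) 0 = c * (μ - 1) - μ) ∧
    (c * (1 - μ) + μ > 0 → (-1 : ℝ) < 0 ∧ c * (μ - 1) - μ < 0) := by
  refine ⟨by rw [hF1]; ring, by rw [hF2]; ring, ⟨?_, ?_, ?_, ?_⟩,
    fun h => ⟨neg_one_lt_zero, by linarith⟩⟩
  · rw [deriv_eq_of_eq_cubic 1 (-3) 2 0 1 fun x => by rw [hF1]; ring]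
    norm_num
  · rw [deriv_eq_of_eq_cubic 0 0 (c - 1) 0 0 fun y => by rw [hF1]; ring]
    ring
  · rw [deriv_eq_of_eq_cubic 0 0 0 0 1 fun x => by rw [hF2]; ring]
    ring
  · rw [deriv_eq_of_eq_cubic 0 (c + 3) (c * (μ - 1) - μ) 0 0 fun y => by rw [hF2]; ring]
    ring
end

section
/- Let μ ≥ 0 and c ∈ ℝ with D := c²(μ+3)² − 2c((μ−11)μ + 6) + (μ−28)μ + 4 ≥ 0, and set A₁ = √D. Then both points (x₃, y₃) = ((A₁ − 5cμ + c + 17μ + 2)/(12μ+4), (−(μ+1)A₁ − cμ² + 8cμ + c + μ² − μ + 2)/(24μ+8)) and (x₄, y₄) = ((−A₁ − 5cμ + c + 17μ + 2)/(12μ+4), ((μ+1)A₁ − cμ² + 8cμ + c + μ² − μ + 2)/(24μ+8)) are equilibria of the system ẋ = x[(c−4)y + x(x+3y−3) + 2], ẏ = y[c(μ+y−1) − 3μ + x(2μ+x+3y−1)], i.e., both components of the vector field vanish at each of these points. -/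
/-- The two nontrivial fixed points of the TFT → ALLC replicator-mutator
system, given by explicit formulas involving `A₁`. -/
theorem nontrivial_fixed_points_TFT_to_ALLC (c μ : ℝ) (hμ : 0 ≤ μ)
    (hD : 0 ≤ c ^ 2 * (μ + 3) ^ 2 - 2 * c * ((μ - 11) * μ + 6) + (μ - 28) * μ + 4)
    (A1 : ℝ)
    (hA1 : A1 = Real.sqrt
      (c ^ 2 * (μ + 3) ^ 2 - 2 * c * ((μ - 11) * μ + 6) + (μ - 28) * μ + 4))
    (x3 y3 x4 y4 : ℝ)
    (hx3 : x3 = (A1 - 5 * c * μ + c + 17 * μ + 2) / (12 * μ + 4))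
    (hy3 : y3 = (-(μ + 1) * A1 - c * μ ^ 2 + 8 * c * μ + c + μ ^ 2 - μ + 2) / (24 * μ + 8))
    (hx4 : x4 = (-A1 - 5 * c * μ + c + 17 * μ + 2) / (12 * μ + 4))
    (hy4 : y4 = ((μ + 1) * A1 - c * μ ^ 2 + 8 * c * μ + c + μ ^ 2 - μ + 2) / (24 * μ + 8)) :
    (x3 * ((c - 4) * y3 + x3 * (x3 + 3 * y3 - 3) + 2) = 0 ∧
     y3 * (c * (μ + y3 - 1) - 3 * μ + x3 * (2 * μ + x3 + 3 * y3 - 1)) = 0) ∧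
    (x4 * ((c - 4) * y4 + x4 * (x4 + 3 * y4 - 3) + 2) = 0 ∧
     y4 * (c * (μ + y4 - 1) - 3 * μ + x4 * (2 * μ + x4 + 3 * y4 - 1)) = 0) := by
  have h2 : A1 ^ 2 = c ^ 2 * (μ + 3) ^ 2 - 2 * c * ((μ - 11) * μ + 6) + (μ - 28) * μ + 4 := by
    rw [hA1]; exact Real.sq_sqrt hD
  have hd1 : (12 * μ + 4 : ℝ) ≠ 0 := by positivity
  have hd2 : (24 * μ + 8 : ℝ) ≠ 0 := by positivity
  have hM : ((12*μ+4)^3*(24*μ+8)^3 : ℝ) ≠ 0 := by positivity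
  have ex3 : (12 * μ + 4) * x3 = A1 - 5 * c * μ + c + 17 * μ + 2 := by
    rw [hx3]; field_simp
  have ey3 : (24 * μ + 8) * y3 = -(μ + 1) * A1 - c * μ ^ 2 + 8 * c * μ + c + μ ^ 2 - μ + 2 := by
    rw [hy3]; field_simp
  have ex4 : (12 * μ + 4) * x4 = -A1 - 5 * c * μ + c + 17 * μ + 2 := by
    rw [hx4]; field_simp
  have ey4 : (24 * μ + 8) * y4 = (μ + 1) * A1 - c * μ ^ 2 + 8 * c * μ + c + μ ^ 2 - μ + 2 := by
    rw [hy4]; field_simp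
  refine ⟨⟨?_, ?_⟩, ?_, ?_⟩
  · have k : ((12*μ+4)^3*(24*μ+8)^3 : ℝ) * (x3 * ((c - 4) * y3 + x3 * (x3 + 3 * y3 - 3) + 2)) = 0 := by
      linear_combination (1990656*x3^2*μ^5 + 3317760*x3^2*μ^4 + 2211840*x3^2*μ^3 + 737280*x3^2*μ^2 + 122880*x3^2*μ + 8192*x3^2 + 5971968*x3*y3*μ^5 + 9953280*x3*y3*μ^4 + 6635520*x3*y3*μ^3 + 2211840*x3*y3*μ^2 + 368640*x3*y3*μ + 24576*x3*y3 + 165888*x3*A1*μ^4 + 221184*x3*A1*μ^3 + 110592*x3*A1*μ^2 + 24576*x3*A1*μ + 2048*x3*A1 - 829440*x3*c*μ^5 - 940032*x3*c*μ^4 - 331776*x3*c*μ^3 - 12288*x3*c*μ^2 + 14336*x3*c*μ + 2048*x3*c - 3151872*x3*μ^5 - 5861376*x3*μ^4 - 4313088*x3*μ^3 - 1572864*x3*μ^2 - 284672*x3*μ - 20480*x3 + 497664*y3*A1*μ^4 + 663552*y3*A1*μ^3 + 331776*y3*A1*μ^2 + 73728*y3*A1*μ + 6144*y3*A1 - 497664*y3*c*μ^5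 + 497664*y3*c*μ^4 + 1216512*y3*c*μ^3 + 700416*y3*c*μ^2 + 165888*y3*c*μ + 14336*y3*c + 497664*y3*μ^5 - 995328*y3*μ^4 - 1880064*y3*μ^3 - 1032192*y3*μ^2 - 239616*y3*μ - 20480*y3 + 13824*A1^2*μ^3 + 13824*A1^2*μ^2 + 4608*A1^2*μ + 512*A1^2 - 138240*A1*c*μ^4 - 110592*A1*c*μ^3 - 18432*A1*c*μ^2 + 4096*A1*c*μ + 1024*A1*c - 27648*A1*μ^4 - 138240*A1*μ^3 - 119808*A1*μ^2 - 37888*A1*μ - 4096*A1 + 345600*c^2*μ^5 + 207360*c^2*μ^4 - 9216*c^2*μ^3 - 19456*c^2*μ^2 - 512*c^2*μ + 512*c^2 + 138240*c*μ^5 + 663552*c*μ^4 + 460800*c*μ^3 + 69632*c*μ^2 - 17408*c*μ - 4096*c - 483840*μ^5 - 705024*μ^4 - 216576*μ^3 + 74240*μ^2 + 47104*μ + 6144) * ex3 + (20736*A1^2*μ^3 + 20736*A1^2*μ^2 + 6912*A1^2*μ + 768*A1^2 - 124416*A1*c*μ^4 - 55296*A1*c*μ^3 + 27648*A1*c*μ^2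 + 18432*A1*c*μ + 2560*A1*c + 373248*A1*μ^4 + 345600*A1*μ^3 + 96768*A1*μ^2 + 4608*A1*μ - 1024*A1 + 103680*c^2*μ^5 - 158976*c^2*μ^4 - 179712*c^2*μ^3 - 35328*c^2*μ^2 + 6400*c^2*μ + 1792*c^2 - 456192*c*μ^5 + 691200*c*μ^4 + 1022976*c*μ^3 + 393216*c*μ^2 + 51712*c*μ + 1024*c + 352512*μ^5 - 781056*μ^4 - 1154304*μ^3 - 503040*μ^2 - 88064*μ - 5120) * ey3 + (-20736*A1*μ^4 - 27648*A1*μ^3 - 13824*A1*μ^2 - 3072*A1*μ - 256*A1 + 103680*c*μ^5 + 117504*c*μ^4 + 41472*c*μ^3 + 1536*c*μ^2 - 1792*c*μ - 256*c - 352512*μ^5 - 511488*μ^4 - 290304*μ^3 - 79872*μ^2 - 10496*μ - 512) * h2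
    exact (mul_eq_zero.mp k).resolve_left hM
  · have k : ((12*μ+4)^3*(24*μ+8)^3 : ℝ) * (y3 * (c * (μ + y3 - 1) - 3 * μ + x3 * (2 * μ + x3 + 3 * y3 - 1))) = 0 := by
      linear_combination (1990656*x3*y3*μ^5 + 3317760*x3*y3*μ^4 + 2211840*x3*y3*μ^3 + 737280*x3*y3*μ^2 + 122880*x3*y3*μ + 8192*x3*y3 + 5971968*y3^2*μ^5 + 9953280*y3^2*μ^4 + 6635520*y3^2*μ^3 + 2211840*y3^2*μ^2 + 368640*y3^2*μ + 24576*y3^2 + 165888*y3*A1*μ^4 + 221184*y3*A1*μ^3 + 110592*y3*A1*μ^2 + 24576*y3*A1*μ + 2048*y3*A1 - 829440*y3*c*μ^5 - 940032*y3*c*μ^4 - 331776*y3*c*μ^3 - 12288*y3*c*μ^2 + 14336*y3*c*μ + 2048*y3*c + 3981312*y3*μ^6 + 7464960*y3*μ^5 + 5197824*y3*μ^4 + 1585152*y3*μ^3 + 147456*y3*μ^2 - 22528*y3*μ - 4096*y3) * ex3 + (248832*y3*A1*μ^4 + 331776*y3*A1*μ^3 + 165888*y3*A1*μ^2 + 36864*y3*A1*μ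 + 3072*y3*A1 - 248832*y3*c*μ^5 + 248832*y3*c*μ^4 + 608256*y3*c*μ^3 + 350208*y3*c*μ^2 + 82944*y3*c*μ + 7168*y3*c + 4230144*y3*μ^5 + 6137856*y3*μ^4 + 3483648*y3*μ^3 + 958464*y3*μ^2 + 125952*y3*μ + 6144*y3 - 10368*A1^2*μ^4 - 13824*A1^2*μ^3 - 6912*A1^2*μ^2 - 1536*A1^2*μ - 128*A1^2 + 10368*c^2*μ^6 + 76032*c^2*μ^5 + 183168*c^2*μ^4 + 167424*c^2*μ^3 + 71552*c^2*μ^2 + 14592*c^2*μ + 1152*c^2 - 20736*c*μ^6 + 200448*c*μ^5 + 165888*c*μ^4 - 16896*c*μ^3 - 49408*c*μ^2 - 15616*c*μ - 1536*c + 10368*μ^6 - 276480*μ^5 - 338688*μ^4 - 136704*μ^3 - 15232*μ^2 + 2560*μ + 512) * ey3 + (10368*A1*μ^5 + 24192*A1*μ^4 + 20736*A1*μ^3 + 8448*A1*μ^2 + 1664*A1*μ + 128*A1 + 10368*c*μ^6 - 69120*c*μ^5 - 114048*c*μ^4 - 67584*c*μ^3 - 19072*c*μ^2 - 2560*c*μ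 - 128*c - 10368*μ^6 - 3456*μ^5 - 13824*μ^4 - 22272*μ^3 - 12416*μ^2 - 2944*μ - 256) * h2
    exact (mul_eq_zero.mp k).resolve_left hM
  · have k : ((12*μ+4)^3*(24*μ+8)^3 : ℝ) * (x4 * ((c - 4) * y4 + x4 * (x4 + 3 * y4 - 3) + 2)) = 0 := by
      linear_combination (1990656*x4^2*μ^5 + 3317760*x4^2*μ^4 + 2211840*x4^2*μ^3 + 737280*x4^2*μ^2 + 122880*x4^2*μ + 8192*x4^2 + 5971968*x4*y4*μ^5 + 9953280*x4*y4*μ^4 + 6635520*x4*y4*μ^3 + 2211840*x4*y4*μ^2 + 368640*x4*y4*μ + 24576*x4*y4 - 165888*x4*A1*μ^4 - 221184*x4*A1*μ^3 - 110592*x4*A1*μ^2 - 24576*x4*A1*μ - 2048*x4*A1 - 829440*x4*c*μ^5 - 940032*x4*c*μ^4 - 331776*x4*c*μ^3 - 12288*x4*c*μ^2 + 14336*x4*c*μ + 2048*x4*c - 3151872*x4*μ^5 - 5861376*x4*μ^4 - 4313088*x4*μ^3 - 1572864*x4*μ^2 - 284672*x4*μ - 20480*x4 - 497664*y4*A1*μ^4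 - 663552*y4*A1*μ^3 - 331776*y4*A1*μ^2 - 73728*y4*A1*μ - 6144*y4*A1 - 497664*y4*c*μ^5 + 497664*y4*c*μ^4 + 1216512*y4*c*μ^3 + 700416*y4*c*μ^2 + 165888*y4*c*μ + 14336*y4*c + 497664*y4*μ^5 - 995328*y4*μ^4 - 1880064*y4*μ^3 - 1032192*y4*μ^2 - 239616*y4*μ - 20480*y4 + 13824*A1^2*μ^3 + 13824*A1^2*μ^2 + 4608*A1^2*μ + 512*A1^2 + 138240*A1*c*μ^4 + 110592*A1*c*μ^3 + 18432*A1*c*μ^2 - 4096*A1*c*μ - 1024*A1*c + 27648*A1*μ^4 + 138240*A1*μ^3 + 119808*A1*μ^2 + 37888*A1*μ + 4096*A1 + 345600*c^2*μ^5 + 207360*c^2*μ^4 - 9216*c^2*μ^3 - 19456*c^2*μ^2 - 512*c^2*μ + 512*c^2 + 138240*c*μ^5 + 663552*c*μ^4 + 460800*c*μ^3 + 69632*c*μ^2 - 17408*c*μ - 4096*c - 483840*μ^5 - 705024*μ^4 - 216576*μ^3 + 74240*μ^2 + 47104*μ + 6144) * ex4 + (20736*A1^2*μ^3 + 20736*A1^2*μ^2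 + 6912*A1^2*μ + 768*A1^2 + 124416*A1*c*μ^4 + 55296*A1*c*μ^3 - 27648*A1*c*μ^2 - 18432*A1*c*μ - 2560*A1*c - 373248*A1*μ^4 - 345600*A1*μ^3 - 96768*A1*μ^2 - 4608*A1*μ + 1024*A1 + 103680*c^2*μ^5 - 158976*c^2*μ^4 - 179712*c^2*μ^3 - 35328*c^2*μ^2 + 6400*c^2*μ + 1792*c^2 - 456192*c*μ^5 + 691200*c*μ^4 + 1022976*c*μ^3 + 393216*c*μ^2 + 51712*c*μ + 1024*c + 352512*μ^5 - 781056*μ^4 - 1154304*μ^3 - 503040*μ^2 - 88064*μ - 5120) * ey4 + (20736*A1*μ^4 + 27648*A1*μ^3 + 13824*A1*μ^2 + 3072*A1*μ + 256*A1 + 103680*c*μ^5 + 117504*c*μ^4 + 41472*c*μ^3 + 1536*c*μ^2 - 1792*c*μ - 256*c - 352512*μ^5 - 511488*μ^4 - 290304*μ^3 - 79872*μ^2 - 10496*μ - 512) * h2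
    exact (mul_eq_zero.mp k).resolve_left hM
  · have k : ((12*μ+4)^3*(24*μ+8)^3 : ℝ) * (y4 * (c * (μ + y4 - 1) - 3 * μ + x4 * (2 * μ + x4 + 3 * y4 - 1))) = 0 := by
      linear_combination (1990656*x4*y4*μ^5 + 3317760*x4*y4*μ^4 + 2211840*x4*y4*μ^3 + 737280*x4*y4*μ^2 + 122880*x4*y4*μ + 8192*x4*y4 + 5971968*y4^2*μ^5 + 9953280*y4^2*μ^4 + 6635520*y4^2*μ^3 + 2211840*y4^2*μ^2 + 368640*y4^2*μ + 24576*y4^2 - 165888*y4*A1*μ^4 - 221184*y4*A1*μ^3 - 110592*y4*A1*μ^2 - 24576*y4*A1*μ - 2048*y4*A1 - 829440*y4*c*μ^5 - 940032*y4*c*μ^4 - 331776*y4*c*μ^3 - 12288*y4*c*μ^2 + 14336*y4*c*μ + 2048*y4*c + 3981312*y4*μ^6 + 7464960*y4*μ^5 + 5197824*y4*μ^4 + 1585152*y4*μ^3 + 147456*y4*μ^2 - 22528*y4*μ - 4096*y4) * ex4 + (-248832*y4*A1*μ^4 - 331776*y4*A1*μ^3 - 165888*y4*A1*μ^2 - 36864*y4*A1*μ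 - 3072*y4*A1 - 248832*y4*c*μ^5 + 248832*y4*c*μ^4 + 608256*y4*c*μ^3 + 350208*y4*c*μ^2 + 82944*y4*c*μ + 7168*y4*c + 4230144*y4*μ^5 + 6137856*y4*μ^4 + 3483648*y4*μ^3 + 958464*y4*μ^2 + 125952*y4*μ + 6144*y4 - 10368*A1^2*μ^4 - 13824*A1^2*μ^3 - 6912*A1^2*μ^2 - 1536*A1^2*μ - 128*A1^2 + 10368*c^2*μ^6 + 76032*c^2*μ^5 + 183168*c^2*μ^4 + 167424*c^2*μ^3 + 71552*c^2*μ^2 + 14592*c^2*μ + 1152*c^2 - 20736*c*μ^6 + 200448*c*μ^5 + 165888*c*μ^4 - 16896*c*μ^3 - 49408*c*μ^2 - 15616*c*μ - 1536*c + 10368*μ^6 - 276480*μ^5 - 338688*μ^4 - 136704*μ^3 - 15232*μ^2 + 2560*μ + 512) * ey4 + (-10368*A1*μ^5 - 24192*A1*μ^4 - 20736*A1*μ^3 - 8448*A1*μ^2 - 1664*A1*μ - 128*A1 + 10368*c*μ^6 - 69120*c*μ^5 - 114048*c*μ^4 - 67584*c*μ^3 - 19072*c*μ^2 - 2560*c*μ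 - 128*c - 10368*μ^6 - 3456*μ^5 - 13824*μ^4 - 22272*μ^3 - 12416*μ^2 - 2944*μ - 256) * h2
    exact (mul_eq_zero.mp k).resolve_left hM
end

section
/- For the system G(x,y) = (x·[(c−4)y − 5μ + 4μ(x+y) + x(x+3y−3) + 2], y·[c(y−1) + x(x+3y−1)]), the point (0, 1) (all-TFT) is an equilibrium, its Jacobian matrix at (0,1) is triangular with eigenvalues c − μ − 2 and c, and if 0 < c < μ + 2 then the eigenvalues have opposite signs, so (0,1) is a saddle point. -/
/-!
Both components vanish at `(0, 1)` because `x` divides `G1` and `y - 1` divides `G2(0, ·)`.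
Since `G1(0, ·) ≡ 0`, the Jacobian there is lower triangular, and each diagonal entry is the
derivative of a function of the form `(t - a) * g t` at `a`, which is just `g a`.
-/

theorem hasDerivAt_sub_mul_of_continuousAt {𝕜 : Type*} [NontriviallyNormedField 𝕜]
    {g : 𝕜 → 𝕜} {a : 𝕜} (hg : ContinuousAt g a) :
    HasDerivAt (fun x => (x - a) * g x) (g a) a := by
  rw [hasDerivAt_iff_tendsto_slope]
  refine (hg.tendsto.mono_left nhdsWithin_le_nhds).congr' ?_
  filter_upwards [self_mem_nhdsWithin] with x hx
  rw [slope_def_field, sub_self, zero_mul, sub_zero, mul_div_cancel_left₀ _ (sub_ne_zero.2 hx)]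

/-- For the ALLD → ALLC replicator-mutator system, `(0,1)` (all-TFT) is an
equilibrium whose Jacobian is triangular with eigenvalues `c − μ − 2` and `c`;
if `0 < c < μ + 2` the eigenvalues have opposite signs, so `(0,1)` is a saddle. -/
theorem TFT_vertex_saddle_ALLD_to_ALLC (c μ : ℝ)
    (G1 G2 : ℝ → ℝ → ℝ)
    (hG1 : ∀ x y, G1 x y
      = x * ((c - 4) * y - 5 * μ + 4 * μ * (x + y) + x * (x + 3 * y - 3) + 2))
    (hG2 : ∀ x y, G2 x y = y * (c * (y - 1) + x * (x + 3 * y - 1))) :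
    G1 0 1 = 0 ∧ G2 0 1 = 0 ∧
    (deriv (fun x => G1 x 1) 0 = c - μ - 2 ∧
     deriv (fun y => G1 0 y) 1 = 0 ∧
     deriv (fun x => G2 x 1) 0 = 2 ∧
     deriv (fun y => G2 0 y) 1 = c) ∧
    (0 < c → c < μ + 2 → c - μ - 2 < 0 ∧ 0 < c) := by
  have hx1 : (fun x => G1 x 1) = fun x => (x - 0) * (x ^ 2 + 4 * μ * x + (c - μ - 2)) := by
    funext x; rw [hG1]; ring
  have hy1 : (fun y => G1 0 y) = fun _ => 0 := by
    funext y; rw [hG1]; ring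
  have hx2 : (fun x => G2 x 1) = fun x => (x - 0) * (x + 2) := by
    funext x; rw [hG2]; ring
  have hy2 : (fun y => G2 0 y) = fun y => (y - 1) * (c * y) := by
    funext y; rw [hG2]; ring
  refine ⟨by rw [hG1]; ring, by rw [hG2]; ring, ⟨?_, ?_, ?_, ?_⟩, fun hc hcμ => ⟨by linarith, hc⟩⟩
  · rw [hx1, (hasDerivAt_sub_mul_of_continuousAt (by fun_prop)).deriv]; ring
  · rw [hy1, deriv_const]
  · rw [hx2, (hasDerivAt_sub_mul_of_continuousAt (by fun_prop)).deriv]; ring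
  · rw [hy2, (hasDerivAt_sub_mul_of_continuousAt (by fun_prop)).deriv, mul_one]
end

section
/- Let μ ≥ 0 and set x* = (3 − 4μ − √(16μ² − 4μ + 1))/2 (the square root is real since 16μ² − 4μ + 1 > 0 for all real μ). Then (x*, 0) is an equilibrium of the system ẋ = x[(c−4)y − 5μ + 4μ(x+y) + x(x+3y−3) + 2], ẏ = y[c(y−1) + x(x+3y−1)], for every c ∈ ℝ. Moreover, if 0 < μ < 2/5 and c > 0, then the Jacobian at (x*, 0) is triangular with both eigenvalues, −x*·√(16μ² − 4μ + 1) and −c + x*(x* − 1), strictly negative, so (x*, 0) is a linearly asymptotically stable node. -/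
/-!
On the edge `y = 0` the first component is `x · q(x)` with `q(x) = x² + (4μ − 3)x + 2 − 5μ`,
and `x*` is the smaller root of `q`, whose discriminant is `16μ² − 4μ + 1`. At a root the
product rule gives the slope `x* · q'(x*) = x* (2x* + 4μ − 3) = −x* √(16μ² − 4μ + 1)`, while the
factor `y` in the second component makes the Jacobian triangular with transverse eigenvalue
`−c + x*(x* − 1)`. Both are negative as soon as `0 < x* < 1`, which comparing `(3 − 4μ)²` and
`(1 − 4μ)²` with the discriminant shows to hold exactly for `0 < μ < 2/5`.
-/

lemma hasDerivAt_id_mul {f : ℝ → ℝ} {f' r : ℝ} (hf : HasDerivAt f f' r) :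
    HasDerivAt (fun x => x * f x) (f r + r * f') r :=
  ((hasDerivAt_id' r).mul hf).congr_deriv (by ring)

def boundaryQuadratic (μ x : ℝ) : ℝ := x ^ 2 + (4 * μ - 3) * x + (2 - 5 * μ)

lemma hasDerivAt_boundaryQuadratic (μ x : ℝ) :
    HasDerivAt (boundaryQuadratic μ) (2 * x + (4 * μ - 3)) x := by
  show HasDerivAt (fun x => x ^ 2 + (4 * μ - 3) * x + (2 - 5 * μ)) _ x
  exact (((hasDerivAt_pow 2 x).fun_add ((hasDerivAt_id' x).const_mul (4 * μ - 3))).add_const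
    (2 - 5 * μ)).congr_deriv (by ring)

lemma hasDerivAt_transverse (c x : ℝ) :
    HasDerivAt (fun y => y * (c * (y - 1) + x * (x + 3 * y - 1))) (-c + x * (x - 1)) 0 := by
  have h1 := ((hasDerivAt_id' (0 : ℝ)).sub_const 1).const_mul c
  have h2 := ((((hasDerivAt_id' (0 : ℝ)).const_mul 3).const_add x).sub_const 1).const_mul x
  exact (hasDerivAt_id_mul (h1.fun_add h2)).congr_deriv (by ring)

lemma boundaryQuadratic_discrim_pos (μ : ℝ) : 0 < 16 * μ ^ 2 - 4 * μ + 1 := by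
  nlinarith [sq_nonneg (4 * μ - 1 / 2)]

section SmallerRoot

variable {μ s x : ℝ} (hs : s ^ 2 = 16 * μ ^ 2 - 4 * μ + 1) (hs0 : 0 ≤ s)
  (hx : 2 * x = 3 - 4 * μ - s)
include hs hx

lemma boundaryQuadratic_eq_zero : boundaryQuadratic μ x = 0 := by
  unfold boundaryQuadratic
  linear_combination (2 * x + 4 * μ - 3 - s) / 4 * hx + hs / 4

include hs0

lemma boundaryQuadratic_root_pos (hμ : μ < 2 / 5) : 0 < x := by
  nlinarith

lemma boundaryQuadratic_root_lt_one (hμ : 0 < μ) : x < 1 := by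
  nlinarith

end SmallerRoot

theorem boundary_stable_node_ALLD_to_ALLC_general (μ : ℝ)
    (xs : ℝ) (hxs : xs = (3 - 4 * μ - Real.sqrt (16 * μ ^ 2 - 4 * μ + 1)) / 2)
    (G1 G2 : ℝ → ℝ → ℝ → ℝ)
    (hG1 : ∀ c x y, G1 c x y
      = x * ((c - 4) * y - 5 * μ + 4 * μ * (x + y) + x * (x + 3 * y - 3) + 2))
    (hG2 : ∀ c x y, G2 c x y = y * (c * (y - 1) + x * (x + 3 * y - 1))) :
    (0 < 16 * μ ^ 2 - 4 * μ + 1) ∧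
    (∀ c : ℝ, G1 c xs 0 = 0 ∧ G2 c xs 0 = 0) ∧
    (0 < μ → μ < 2 / 5 → ∀ c : ℝ, 0 < c →
      (deriv (fun x => G1 c x 0) xs = -xs * Real.sqrt (16 * μ ^ 2 - 4 * μ + 1) ∧
       deriv (fun x => G2 c x 0) xs = 0 ∧
       deriv (fun y => G2 c xs y) 0 = -c + xs * (xs - 1)) ∧
      -xs * Real.sqrt (16 * μ ^ 2 - 4 * μ + 1) < 0 ∧
      -c + xs * (xs - 1) < 0) := by
  have hD := boundaryQuadratic_discrim_pos μ
  set s := Real.sqrt (16 * μ ^ 2 - 4 * μ + 1)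
  have hs : s ^ 2 = 16 * μ ^ 2 - 4 * μ + 1 := Real.sq_sqrt hD.le
  have hx : 2 * xs = 3 - 4 * μ - s := by rw [hxs]; ring
  have hq := boundaryQuadratic_eq_zero hs hx
  have hG1_edge (c : ℝ) : (fun x => G1 c x 0) = fun x => x * boundaryQuadratic μ x := by
    funext x; rw [hG1, boundaryQuadratic]; ring
  have hG2_edge (c : ℝ) : (fun x => G2 c x 0) = fun _ => 0 := by
    funext x; rw [hG2]; ring
  refine ⟨hD, fun c => ⟨by simpa [hq] using congrFun (hG1_edge c) xs, congrFun (hG2_edge c) xs⟩,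
    fun hμ0 hμ25 c hc => ?_⟩
  have hx0 := boundaryQuadratic_root_pos hs (Real.sqrt_nonneg _) hx hμ25
  have hx1 := boundaryQuadratic_root_lt_one hs (Real.sqrt_nonneg _) hx hμ0
  have hslope : HasDerivAt (fun y => G2 c xs y) (-c + xs * (xs - 1)) 0 := by
    simpa only [hG2] using hasDerivAt_transverse c xs
  refine ⟨⟨?_, by rw [hG2_edge, deriv_const], hslope.deriv⟩, ?_, ?_⟩
  · rw [hG1_edge, (hasDerivAt_id_mul (hasDerivAt_boundaryQuadratic μ xs)).deriv, hq]
    linear_combination xs * hx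
  · nlinarith [Real.sqrt_pos.mpr hD]
  · nlinarith

/-- For the ALLD → ALLC replicator-mutator system, the boundary point
`(x*, 0)` with `x* = (3 − 4μ − √(16μ² − 4μ + 1))/2` is an equilibrium for
every `c`; moreover, for `0 < μ < 2/5` and `c > 0` the Jacobian there is
triangular with both eigenvalues negative, so `(x*, 0)` is a linearly
asymptotically stable node. -/
theorem boundary_stable_node_ALLD_to_ALLC (μ : ℝ) (hμ : 0 ≤ μ)
    (xs : ℝ) (hxs : xs = (3 - 4 * μ - Real.sqrt (16 * μ ^ 2 - 4 * μ + 1)) / 2)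
    (G1 G2 : ℝ → ℝ → ℝ → ℝ)
    (hG1 : ∀ c x y, G1 c x y
      = x * ((c - 4) * y - 5 * μ + 4 * μ * (x + y) + x * (x + 3 * y - 3) + 2))
    (hG2 : ∀ c x y, G2 c x y = y * (c * (y - 1) + x * (x + 3 * y - 1))) :
    (0 < 16 * μ ^ 2 - 4 * μ + 1) ∧
    (∀ c : ℝ, G1 c xs 0 = 0 ∧ G2 c xs 0 = 0) ∧
    (0 < μ → μ < 2 / 5 → ∀ c : ℝ, 0 < c →
      (deriv (fun x => G1 c x 0) xs = -xs * Real.sqrt (16 * μ ^ 2 - 4 * μ + 1) ∧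
       deriv (fun x => G2 c x 0) xs = 0 ∧
       deriv (fun y => G2 c xs y) 0 = -c + xs * (xs - 1)) ∧
      -xs * Real.sqrt (16 * μ ^ 2 - 4 * μ + 1) < 0 ∧
      -c + xs * (xs - 1) < 0) :=
  boundary_stable_node_ALLD_to_ALLC_general μ xs hxs G1 G2 hG1 hG2
end

section
/- Let c ∈ ℝ and μ ∈ ℝ with μ ≠ 1/4 and μ ≠ 1, suppose D := (4cμ + c − 11μ + 2)² + 8c(4μ−1)(−c + μ + 2) ≥ 0, and set A₈ = √D. Then both points (x₄, y₄) = (−(4cμ + A₈ + c − 11μ + 2)/(16μ − 4), (8cμ² − 10cμ + (2μ−1)A₈ + c + 18μ² − 11μ + 2)/(8(μ−1)(4μ−1))) and (x₅, y₅) = ((−4cμ + A₈ − c + 11μ − 2)/(16μ − 4), (8cμ² − 10cμ − (2μ−1)A₈ + c + 18μ² − 11μ + 2)/(8(μ−1)(4μ−1))) are equilibria of the system ẋ = x[(c−4)y − 5μ + 4μ(x+y) + x(x+3y−3) + 2], ẏ = y[c(y−1) + x(x+3y−1)]. -/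
/-!
The per-capita growth rates of ALLD and TFT differ by an affine function of `(x, y)`, so an
interior equilibrium lies on the line where that difference vanishes. Restricted to this line,
`4 (μ - 1)` times the common growth rate is minus the quadratic
`2 (4μ - 1) x² + (4cμ + c - 11μ + 2) x + c (c - μ - 2)`, whose discriminant is `D`;
`x₄` and `x₅` are its two roots, and `y₄`, `y₅` are the corresponding points of the line.
-/

namespace ALLDToALLC

/-- Per-capita growth rate `ẋ / x` of ALLD. -/
def rateALLD (c μ x y : ℝ) : ℝ :=
  (c - 4) * y - 5 * μ + 4 * μ * (x + y) + x * (x + 3 * y - 3) + 2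

/-- Per-capita growth rate `ẏ / y` of TFT. -/
def rateTFT (c x y : ℝ) : ℝ :=
  c * (y - 1) + x * (x + 3 * y - 1)

def IsEquilibrium (c μ x y : ℝ) : Prop :=
  x * rateALLD c μ x y = 0 ∧ y * rateTFT c x y = 0

variable {c μ x y : ℝ}

theorem rateALLD_sub_rateTFT (c μ x y : ℝ) :
    rateALLD c μ x y - rateTFT c x y
      = 4 * (μ - 1) * y + 2 * (2 * μ - 1) * x + c - 5 * μ + 2 := by
  unfold rateALLD rateTFT
  ring

theorem mul_rateTFT_of_mem_line (hline : 4 * (μ - 1) * y = 5 * μ - 2 - c - 2 * (2 * μ - 1) * x) :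
    4 * (μ - 1) * rateTFT c x y
      = -(2 * (4 * μ - 1) * (x * x) + (4 * c * μ + c - 11 * μ + 2) * x + c * (c - μ - 2)) := by
  unfold rateTFT
  linear_combination (c + 3 * x) * hline

theorem isEquilibrium_of_root (hμ : μ ≠ 1)
    (hroot : 2 * (4 * μ - 1) * (x * x) + (4 * c * μ + c - 11 * μ + 2) * x + c * (c - μ - 2) = 0)
    (hline : 4 * (μ - 1) * y = 5 * μ - 2 - c - 2 * (2 * μ - 1) * x) :
    IsEquilibrium c μ x y := by
  have hTFT : rateTFT c x y = 0 := by
    have h := mul_rateTFT_of_mem_line hline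
    rw [hroot, neg_zero] at h
    exact (mul_eq_zero.mp h).resolve_left (mul_ne_zero four_ne_zero (sub_ne_zero.mpr hμ))
  have hALLD : rateALLD c μ x y = 0 := by
    linear_combination rateALLD_sub_rateTFT c μ x y + hTFT + hline
  exact ⟨by rw [hALLD, mul_zero], by rw [hTFT, mul_zero]⟩

/-- The equilibrium attached to a square root `s` of the discriminant; `s = -√D` gives
`(x₄, y₄)` and `s = √D` gives `(x₅, y₅)`. -/
theorem isEquilibrium_of_sq_eq_discrim (hμ1 : μ ≠ 1 / 4) (hμ2 : μ ≠ 1) {s : ℝ}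
    (hs : s ^ 2 = (4 * c * μ + c - 11 * μ + 2) ^ 2 + 8 * c * (4 * μ - 1) * (-c + μ + 2)) :
    IsEquilibrium c μ ((-(4 * c * μ + c - 11 * μ + 2) + s) / (16 * μ - 4))
      ((8 * c * μ ^ 2 - 10 * c * μ - (2 * μ - 1) * s + c + 18 * μ ^ 2 - 11 * μ + 2)
        / (8 * (μ - 1) * (4 * μ - 1))) := by
  have hμ1' : 4 * μ - 1 ≠ 0 := fun h => hμ1 (by linarith)
  have hμ2' : μ - 1 ≠ 0 := sub_ne_zero.mpr hμ2
  have hden : 16 * μ - 4 = 2 * (2 * (4 * μ - 1)) := by ring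
  rw [hden]
  have hroot := (quadratic_eq_zero_iff (a := 2 * (4 * μ - 1)) (b := 4 * c * μ + c - 11 * μ + 2)
    (c := c * (c - μ - 2)) (by positivity) (s := s) (by rw [discrim]; linear_combination -hs)
    _).mpr (Or.inl rfl)
  refine isEquilibrium_of_root hμ2 hroot ?_
  field_simp
  ring

end ALLDToALLC

/-- The two interior fixed points of the ALLD → ALLC replicator-mutator
system, given by explicit formulas involving `A₈`. -/
theorem interior_fixed_points_ALLD_to_ALLC (c μ : ℝ)
    (hμ1 : μ ≠ 1 / 4) (hμ2 : μ ≠ 1)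
    (hD : 0 ≤ (4 * c * μ + c - 11 * μ + 2) ^ 2
              + 8 * c * (4 * μ - 1) * (-c + μ + 2))
    (A8 : ℝ)
    (hA8 : A8 = Real.sqrt ((4 * c * μ + c - 11 * μ + 2) ^ 2
                + 8 * c * (4 * μ - 1) * (-c + μ + 2)))
    (x4 y4 x5 y5 : ℝ)
    (hx4 : x4 = -(4 * c * μ + A8 + c - 11 * μ + 2) / (16 * μ - 4))
    (hy4 : y4 = (8 * c * μ ^ 2 - 10 * c * μ + (2 * μ - 1) * A8 + c
                 + 18 * μ ^ 2 - 11 * μ + 2) / (8 * (μ - 1) * (4 * μ - 1)))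
    (hx5 : x5 = (-(4 * c * μ) + A8 - c + 11 * μ - 2) / (16 * μ - 4))
    (hy5 : y5 = (8 * c * μ ^ 2 - 10 * c * μ - (2 * μ - 1) * A8 + c
                 + 18 * μ ^ 2 - 11 * μ + 2) / (8 * (μ - 1) * (4 * μ - 1))) :
    (x4 * ((c - 4) * y4 - 5 * μ + 4 * μ * (x4 + y4) + x4 * (x4 + 3 * y4 - 3) + 2) = 0 ∧
     y4 * (c * (y4 - 1) + x4 * (x4 + 3 * y4 - 1)) = 0) ∧
    (x5 * ((c - 4) * y5 - 5 * μ + 4 * μ * (x5 + y5) + x5 * (x5 + 3 * y5 - 3) + 2) = 0 ∧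
     y5 * (c * (y5 - 1) + x5 * (x5 + 3 * y5 - 1)) = 0) := by
  have hA8sq : A8 ^ 2 = (4 * c * μ + c - 11 * μ + 2) ^ 2
      + 8 * c * (4 * μ - 1) * (-c + μ + 2) := by
    rw [hA8, Real.sq_sqrt hD]
  have h4 : ALLDToALLC.IsEquilibrium c μ x4 y4 := by
    convert ALLDToALLC.isEquilibrium_of_sq_eq_discrim hμ1 hμ2 (s := -A8)
      (by rw [neg_sq, hA8sq]) using 2
    · rw [hx4]; ring
    · rw [hy4]; ring
  have h5 : ALLDToALLC.IsEquilibrium c μ x5 y5 := by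
    convert ALLDToALLC.isEquilibrium_of_sq_eq_discrim hμ1 hμ2 (s := A8) hA8sq using 2
    rw [hx5]; ring
  exact ⟨h4, h5⟩
end

section
/- Let μ ∈ ℝ with μ ≠ 3/4 and (1−μ)·μ·(3μ−2)·(4μ−1) ≥ 0 (so the square root below is real). Then c = [μ(28μ − 25) + 6 − 4√6·√((1−μ)μ(3μ−2)(4μ−1))] / (3 − 4μ)² satisfies (4cμ + c − 11μ + 2)² + 8c(4μ−1)(−c + μ + 2) = 0; that is, this c is a root of the discriminant whose vanishing marks the saddle-node bifurcation at which the two interior fixed points of the ALLD → ALLC replicator-mutator system coalesce. -/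
/-!
As a polynomial in `c` the discriminant is `(3 - 4μ)² c² - 2 (μ (28μ - 25) + 6) c + (2 - 11μ)²`.
The discriminant of this quadratic is a difference of squares and factors as
`384 (1 - μ) μ (3μ - 2) (4μ - 1) = (8 √6 √((1 - μ) μ (3μ - 2) (4μ - 1)))²`, so the given `c` is its
smaller root by the quadratic formula.
-/

open Real

/-- The radicand of `A₈`. -/
def interiorDiscriminant (μ c : ℝ) : ℝ :=
  (4 * c * μ + c - 11 * μ + 2) ^ 2 + 8 * c * (4 * μ - 1) * (-c + μ + 2)

lemma interiorDiscriminant_eq_quadratic (μ c : ℝ) :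
    interiorDiscriminant μ c =
      (3 - 4 * μ) ^ 2 * (c * c) + (-2 * (μ * (28 * μ - 25) + 6)) * c + (2 - 11 * μ) ^ 2 := by
  unfold interiorDiscriminant
  ring

lemma discrim_interiorDiscriminant (μ : ℝ) :
    discrim ((3 - 4 * μ) ^ 2) (-2 * (μ * (28 * μ - 25) + 6)) ((2 - 11 * μ) ^ 2) =
      384 * ((1 - μ) * μ * (3 * μ - 2) * (4 * μ - 1)) := by
  unfold discrim
  ring

lemma discrim_interiorDiscriminant_eq_mul_self {μ : ℝ}
    (hD : 0 ≤ (1 - μ) * μ * (3 * μ - 2) * (4 * μ - 1)) :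
    discrim ((3 - 4 * μ) ^ 2) (-2 * (μ * (28 * μ - 25) + 6)) ((2 - 11 * μ) ^ 2) =
      (8 * √6 * √((1 - μ) * μ * (3 * μ - 2) * (4 * μ - 1))) *
        (8 * √6 * √((1 - μ) * μ * (3 * μ - 2) * (4 * μ - 1))) := by
  set D := (1 - μ) * μ * (3 * μ - 2) * (4 * μ - 1)
  rw [discrim_interiorDiscriminant,
    show 8 * √6 * √D * (8 * √6 * √D) = 64 * (√6 * √6) * (√D * √D) by ring,
    mul_self_sqrt (by norm_num : (0 : ℝ) ≤ 6), mul_self_sqrt hD]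
  ring

/-- The saddle-node bifurcation curve of the ALLD → ALLC replicator-mutator
system: the given `c` is a root of the discriminant. -/
theorem saddle_node_curve_ALLD_to_ALLC (μ : ℝ) (hμ : μ ≠ 3 / 4)
    (hD : 0 ≤ (1 - μ) * μ * (3 * μ - 2) * (4 * μ - 1))
    (c : ℝ)
    (hc : c = (μ * (28 * μ - 25) + 6
               - 4 * Real.sqrt 6 * Real.sqrt ((1 - μ) * μ * (3 * μ - 2) * (4 * μ - 1)))
              / (3 - 4 * μ) ^ 2) :
    (4 * c * μ + c - 11 * μ + 2) ^ 2 + 8 * c * (4 * μ - 1) * (-c + μ + 2) = 0 := by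
  have ha : (3 - 4 * μ) ^ 2 ≠ 0 := pow_ne_zero 2 (by contrapose! hμ; linarith)
  have hc_root : c = (-(-2 * (μ * (28 * μ - 25) + 6)) -
      8 * √6 * √((1 - μ) * μ * (3 * μ - 2) * (4 * μ - 1))) / (2 * (3 - 4 * μ) ^ 2) := by
    rw [hc]
    field_simp
    ring
  have hzero := (quadratic_eq_zero_iff ha (discrim_interiorDiscriminant_eq_mul_self hD) c).mpr
    (Or.inr hc_root)
  rwa [← interiorDiscriminant_eq_quadratic] at hzero
end
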